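/- Characterization of the posterior mode: fix an integer K ≥ 2, parameters β ∈ (0,1], γ > 0, η > 0, ν ∈ ℝ^K, and s ∈ ℝ^K with all entries positive, and let L be the log-posterior L(α) := log Γ(K(1−β) + β·∑_i α_i) − ∑_i log Γ(β·α_i + (1−β)) + β·∑_i α_i·log s_i + γ·η·[log Γ(∑_i α_i) − ∑_i log Γ(α_i)] − γ·∑_i α_i·ν_i. A point α ∈ ℝ^K with all entries positive maximizes L over the positive orthant if and only if for every j ∈ {1,…,K}: β·Ψ(K(1−β) + β·∑_i α_i) − β·Ψ(β·α_j + (1−β)) + β·log s_j + γ·η·[Ψ(∑_i α_i) − Ψ(α_j)] − γ·ν_j = 0, where Ψ is the digamma function. -/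

import Mathlib

/-!
Up to a linear term, `L(α) = -B(βα + 1 - β) - γη B(α)`, where
`B(x) = ∑ log Γ(x_i) - log Γ(∑ x_i)` is the logarithm of the multivariate Beta function.
`B` is convex on the positive orthant: in two variables this is Hölder's inequality applied to
Euler's integral `exp B(s, t) = ∫₀¹ x^(s-1) (1-x)^(t-1) dx`, and the identity
`B(x₁, …, x_{n+1}) = B(x₁, …, x_n) + B(x₁ + ⋯ + x_n, x_{n+1})` propagates it to any number of
variables. Hence `L` is concave, and a concave function on an open convex set is maximal at `α`
exactly when all its directional derivatives at `α` vanish. The derivative of `L` at `α` in the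
direction `v` is `∑ v_j E_j`, with `E_j` the left-hand side of the `j`-th equation.
-/

noncomputable def digamma : ℝ → ℝ := deriv (fun x : ℝ => Real.log (Real.Gamma x))

open Real MeasureTheory Set Matrix

namespace ProbabilityTheory

lemma ofReal_betaIntegrand {s t x : ℝ} (hx : x ∈ Icc (0 : ℝ) 1) :
    ((x ^ (s - 1) * (1 - x) ^ (t - 1) : ℝ) : ℂ) =
      (x : ℂ) ^ ((s : ℂ) - 1) * (1 - (x : ℂ)) ^ ((t : ℂ) - 1) := by
  push_cast [Complex.ofReal_cpow hx.1, Complex.ofReal_cpow (sub_nonneg.2 hx.2)]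
  rfl

lemma integrableOn_betaIntegrand {s t : ℝ} (hs : 0 < s) (ht : 0 < t) :
    IntegrableOn (fun x : ℝ => x ^ (s - 1) * (1 - x) ^ (t - 1)) (Ioc 0 1) := by
  have h := Complex.betaIntegral_convergent (u := s) (v := t) (by simpa) (by simpa)
  have h' : IntervalIntegrable (fun x : ℝ => ((x ^ (s - 1) * (1 - x) ^ (t - 1) : ℝ) : ℂ))
      volume 0 1 := by
    refine IntervalIntegrable.congr (fun x hx => ?_) h
    rw [uIoc_of_le zero_le_one] at hx
    exact (ofReal_betaIntegrand (Ioc_subset_Icc_self hx)).symm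
  simpa [IntegrableOn] using
    (intervalIntegrable_iff_integrableOn_Ioc_of_le zero_le_one |>.1 h').re

lemma beta_eq_integral {s t : ℝ} (hs : 0 < s) (ht : 0 < t) :
    beta s t = ∫ x in Ioc (0 : ℝ) 1, x ^ (s - 1) * (1 - x) ^ (t - 1) := by
  rw [beta_eq_betaIntegralReal s t hs ht, Complex.betaIntegral,
    ← intervalIntegral.integral_of_le zero_le_one,
    ← Complex.ofReal_re (∫ x in (0 : ℝ)..1, _), ← intervalIntegral.integral_ofReal]
  congr 1
  refine intervalIntegral.integral_congr fun x hx => ?_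
  rw [uIcc_of_le zero_le_one] at hx
  exact (ofReal_betaIntegrand hx).symm

lemma ofReal_beta_eq_lintegral {s t : ℝ} (hs : 0 < s) (ht : 0 < t) :
    ENNReal.ofReal (beta s t) =
      ∫⁻ x in Ioo (0 : ℝ) 1, ENNReal.ofReal (x ^ (s - 1) * (1 - x) ^ (t - 1)) := by
  rw [beta_eq_integral hs ht,
    ofReal_integral_eq_lintegral_ofReal (integrableOn_betaIntegrand hs ht)]
  · exact setLIntegral_congr Ioo_ae_eq_Ioc.symm
  · exact (ae_restrict_iff' measurableSet_Ioc).2 (ae_of_all _ fun x hx =>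
      mul_nonneg (rpow_nonneg hx.1.le _) (rpow_nonneg (sub_nonneg.2 hx.2) _))

lemma rpow_mul_rpow_convexCombination {u w s t s' t' a b : ℝ} (hu : 0 < u) (hw : 0 < w)
    (hab : a + b = 1) :
    u ^ (a * s + b * s' - 1) * w ^ (a * t + b * t' - 1) =
      (u ^ (s - 1) * w ^ (t - 1)) ^ a * (u ^ (s' - 1) * w ^ (t' - 1)) ^ b := by
  rw [mul_rpow (by positivity) (by positivity), mul_rpow (by positivity) (by positivity),
    ← rpow_mul hu.le, ← rpow_mul hw.le, ← rpow_mul hu.le, ← rpow_mul hw.le,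
    mul_mul_mul_comm, ← rpow_add hu, ← rpow_add hw]
  congr 2 <;> linear_combination hab

theorem beta_mul_add_mul_le_rpow_beta_mul_rpow_beta {s t s' t' a b : ℝ} (hs : 0 < s)
    (ht : 0 < t) (hs' : 0 < s') (ht' : 0 < t') (ha : 0 < a) (hb : 0 < b) (hab : a + b = 1) :
    beta (a * s + b * s') (a * t + b * t') ≤ beta s t ^ a * beta s' t' ^ b := by
  have hB := beta_pos hs ht
  have hB' := beta_pos hs' ht'
  rw [← ENNReal.ofReal_le_ofReal_iff (by positivity), ENNReal.ofReal_mul (by positivity),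
    ← ENNReal.ofReal_rpow_of_nonneg hB.le ha.le, ← ENNReal.ofReal_rpow_of_nonneg hB'.le hb.le,
    ofReal_beta_eq_lintegral hs ht, ofReal_beta_eq_lintegral hs' ht',
    ofReal_beta_eq_lintegral (by positivity) (by positivity)]
  calc _ = ∫⁻ x in Ioo (0 : ℝ) 1, ENNReal.ofReal (x ^ (s - 1) * (1 - x) ^ (t - 1)) ^ a *
        ENNReal.ofReal (x ^ (s' - 1) * (1 - x) ^ (t' - 1)) ^ b := by
        refine setLIntegral_congr_fun measurableSet_Ioo fun x hx => ?_
        have hx' : 0 < 1 - x := sub_pos.2 hx.2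
        have hf (c d : ℝ) : 0 ≤ x ^ c * (1 - x) ^ d :=
          mul_nonneg (rpow_nonneg hx.1.le c) (rpow_nonneg hx'.le d)
        rw [ENNReal.ofReal_rpow_of_nonneg (hf _ _) ha.le,
          ENNReal.ofReal_rpow_of_nonneg (hf _ _) hb.le,
          ← ENNReal.ofReal_mul (rpow_nonneg (hf _ _) a),
          rpow_mul_rpow_convexCombination hx.1 hx' hab]
    _ ≤ _ := ENNReal.lintegral_mul_norm_pow_le (by fun_prop) (by fun_prop) ha.le hb.le hab

end ProbabilityTheory

open ProbabilityTheory

noncomputable def logMultiBeta {ι : Type*} [Fintype ι] (x : ι → ℝ) : ℝ :=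
  ∑ i, log (Gamma (x i)) - log (Gamma (∑ i, x i))

lemma logMultiBeta_fin_two {x : Fin 2 → ℝ} (hx : ∀ i, 0 < x i) :
    logMultiBeta x = log (beta (x 0) (x 1)) := by
  have := Gamma_pos_of_pos (hx 0)
  have := Gamma_pos_of_pos (hx 1)
  have := Gamma_pos_of_pos (add_pos (hx 0) (hx 1))
  rw [logMultiBeta, Fin.sum_univ_two, Fin.sum_univ_two, beta,
    log_div (by positivity) (by positivity), log_mul (by positivity) (by positivity)]

lemma logMultiBeta_fin_succ {n : ℕ} (x : Fin (n + 1) → ℝ) :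
    logMultiBeta x =
      logMultiBeta (Fin.init x) + logMultiBeta ![∑ i, Fin.init x i, x (Fin.last n)] := by
  simp only [logMultiBeta, Fin.sum_univ_castSucc (f := x),
    Fin.sum_univ_castSucc (f := fun i => log (Gamma (x i))), Fin.sum_univ_two, Fin.init,
    Matrix.cons_val_zero, Matrix.cons_val_one]
  ring

theorem convexOn_logMultiBeta_fin_two :
    ConvexOn ℝ (univ.pi fun _ => Ioi 0) (logMultiBeta : (Fin 2 → ℝ) → ℝ) := by
  refine convexOn_iff_forall_pos.2
    ⟨convex_pi fun _ _ => convex_Ioi 0, fun x hx y hy a b ha hb hab => ?_⟩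
  simp only [mem_univ_pi, mem_Ioi] at hx hy
  have hxy : ∀ i, 0 < (a • x + b • y) i := fun i => by
    simp only [Pi.add_apply, Pi.smul_apply, smul_eq_mul]
    have := hx i
    have := hy i
    positivity
  have hB := beta_pos (hx 0) (hx 1)
  have hB' := beta_pos (hy 0) (hy 1)
  rw [logMultiBeta_fin_two hx, logMultiBeta_fin_two hy, logMultiBeta_fin_two hxy, smul_eq_mul,
    smul_eq_mul, ← log_rpow hB, ← log_rpow hB', ← log_mul (by positivity) (by positivity)]
  exact log_le_log (beta_pos (hxy 0) (hxy 1))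
    (beta_mul_add_mul_le_rpow_beta_mul_rpow_beta (hx 0) (hx 1) (hy 0) (hy 1) ha hb hab)

theorem convexOn_logMultiBeta {n : ℕ} (hn : 1 ≤ n) :
    ConvexOn ℝ (univ.pi fun _ => Ioi 0) (logMultiBeta : (Fin n → ℝ) → ℝ) := by
  induction n, hn using Nat.le_induction with
  | base =>
    refine (convexOn_const 0 (convex_pi fun _ _ => convex_Ioi 0)).congr fun x _ => ?_
    simp [logMultiBeta]
  | succ n hn ih =>
    let T : (Fin (n + 1) → ℝ) →ₗ[ℝ] (Fin 2 → ℝ) :=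
      { toFun := fun x => ![∑ i, Fin.init x i, x (Fin.last n)]
        map_add' := fun x y => by ext i; fin_cases i <;> simp [Fin.init, Finset.sum_add_distrib]
        map_smul' := fun c x => by ext i; fin_cases i <;> simp [Fin.init, Finset.mul_sum] }
    have hconv : Convex ℝ (univ.pi fun _ : Fin (n + 1) => Ioi (0 : ℝ)) :=
      convex_pi fun _ _ => convex_Ioi 0
    have h_init := (ih.comp_linearMap (LinearMap.funLeft ℝ ℝ Fin.castSucc)).subset
      (fun x hx => by simp_all) hconv
    have h_last := (convexOn_logMultiBeta_fin_two.comp_linearMap T).subset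
      (fun x hx => by
        simp only [mem_univ_pi, mem_Ioi, mem_preimage] at hx ⊢
        intro i
        fin_cases i
        · exact Finset.sum_pos (fun i _ => hx _) (Finset.univ_nonempty_iff.2 ⟨(⟨0, hn⟩ : Fin n)⟩)
        · exact hx _) hconv
    exact (h_init.add h_last).congr fun x _ => (logMultiBeta_fin_succ x).symm

theorem ConcaveOn.isMaxOn_iff_hasDerivAt_line {E : Type*} [NormedAddCommGroup E]
    [NormedSpace ℝ E] {s : Set E} {f : E → ℝ} {a : E} {f' : E → ℝ} (hf : ConcaveOn ℝ s f)
    (hs : IsOpen s) (ha : a ∈ s) (hf' : ∀ v, HasDerivAt (fun t : ℝ => f (a + t • v)) (f' v) 0) :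
    IsMaxOn f s a ↔ ∀ v, f' v = 0 := by
  constructor
  · intro hmax v
    have hmax_a : IsLocalMax f (a + (0 : ℝ) • v) := by
      simpa using hmax.isLocalMax (hs.mem_nhds ha)
    exact (hmax_a.comp_continuous (g := fun t : ℝ => a + t • v) (by fun_prop)).hasDerivAt_eq_zero
      (hf' v)
  · intro hzero x hx
    have hseg : ConcaveOn ℝ (Icc 0 1) (fun t : ℝ => f (a + t • (x - a))) := by
      refine ((hf.comp_affineMap (AffineMap.lineMap a x)).subset (fun t ht => ?_)
        (convex_Icc 0 1)).congr fun t _ => by simp [AffineMap.lineMap_apply_module', add_comm]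
      exact hf.1.lineMap_mem ha hx ht
    have := hseg.slope_le_of_hasDerivAt (by simp) (by simp) zero_lt_one (hf' (x - a))
    simpa [slope, hzero] using this

lemma hasDerivAt_log_Gamma {x : ℝ} (hx : 0 < x) :
    HasDerivAt (fun y => log (Gamma y)) (digamma x) x :=
  ((differentiableAt_Gamma fun m => by linarith [(Nat.cast_nonneg m : (0 : ℝ) ≤ m)]).log
    (Gamma_pos_of_pos hx).ne').hasDerivAt

lemma hasDerivAt_log_Gamma_line {x : ℝ} (hx : 0 < x) (v : ℝ) :
    HasDerivAt (fun t => log (Gamma (x + t * v))) (digamma x * v) 0 :=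
  (hasDerivAt_log_Gamma hx).comp_of_eq (0 : ℝ) ((hasDerivAt_mul_const v).const_add x) (by simp)

section

variable {ι : Type*} [Fintype ι]

noncomputable def gradLogMultiBeta (x : ι → ℝ) : ι → ℝ :=
  fun i => digamma (x i) - digamma (∑ j, x j)

theorem hasDerivAt_logMultiBeta_line [Nonempty ι] {x : ι → ℝ} (hx : ∀ i, 0 < x i)
    (v : ι → ℝ) :
    HasDerivAt (fun t : ℝ => logMultiBeta (x + t • v)) (gradLogMultiBeta x ⬝ᵥ v) 0 := by
  have hS : 0 < ∑ j, x j := Finset.sum_pos (fun i _ => hx i) Finset.univ_nonempty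
  have h := (HasDerivAt.fun_sum (u := Finset.univ) fun i _ =>
    hasDerivAt_log_Gamma_line (hx i) (v i)).sub (hasDerivAt_log_Gamma_line hS (∑ j, v j))
  have hfun : (fun t : ℝ => logMultiBeta (x + t • v)) =
      fun t => ∑ i, log (Gamma (x i + t * v i)) - log (Gamma (∑ j, x j + t * ∑ j, v j)) := by
    funext t
    simp [logMultiBeta, Finset.sum_add_distrib, Finset.mul_sum]
  rw [hfun]
  refine h.congr_deriv ?_
  rw [Finset.mul_sum, ← Finset.sum_sub_distrib]
  exact Finset.sum_congr rfl fun i _ => by simp only [gradLogMultiBeta]; ring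

lemma sum_mul_add_one_sub (β : ℝ) (α : ι → ℝ) :
    ∑ i, (β * α i + (1 - β)) = Fintype.card ι * (1 - β) + β * ∑ i, α i := by
  simp [Finset.sum_add_distrib, Finset.mul_sum]
  ring

/-- The log-posterior `L` of the paper is `logPosterior β (γ * η) (β • log s - γ • ν)`. -/
noncomputable def logPosterior (β c : ℝ) (w α : ι → ℝ) : ℝ :=
  w ⬝ᵥ α - logMultiBeta (fun i => β * α i + (1 - β)) - c * logMultiBeta α

lemma logPosterior_apply (β c : ℝ) (w α : ι → ℝ) :
    logPosterior β c w α = log (Gamma (Fintype.card ι * (1 - β) + β * ∑ i, α i))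
      - ∑ i, log (Gamma (β * α i + (1 - β))) + w ⬝ᵥ α
      + c * (log (Gamma (∑ i, α i)) - ∑ i, log (Gamma (α i))) := by
  rw [logPosterior, logMultiBeta, logMultiBeta, sum_mul_add_one_sub]
  ring

theorem hasDerivAt_logPosterior_line [Nonempty ι] {β : ℝ} (hβ : 0 < β) (hβ1 : β ≤ 1) (c : ℝ)
    (w : ι → ℝ) {α : ι → ℝ} (hα : ∀ i, 0 < α i) (v : ι → ℝ) :
    HasDerivAt (fun t : ℝ => logPosterior β c w (α + t • v))
      ((w - β • gradLogMultiBeta (fun i => β * α i + (1 - β)) - c • gradLogMultiBeta α) ⬝ᵥ v)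
      0 := by
  have hy : ∀ i, 0 < β * α i + (1 - β) := fun i =>
    add_pos_of_pos_of_nonneg (mul_pos hβ (hα i)) (sub_nonneg.2 hβ1)
  have hlin : HasDerivAt (fun t : ℝ => w ⬝ᵥ α + t * w ⬝ᵥ v) (w ⬝ᵥ v) 0 :=
    (hasDerivAt_mul_const _).const_add _
  have h := (hlin.sub (hasDerivAt_logMultiBeta_line hy (β • v))).sub
    ((hasDerivAt_logMultiBeta_line hα v).const_mul c)
  have hfun : (fun t : ℝ => logPosterior β c w (α + t • v)) = fun t =>
      w ⬝ᵥ α + t * w ⬝ᵥ v - logMultiBeta ((fun i => β * α i + (1 - β)) + t • β • v)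
        - c * logMultiBeta (α + t • v) := by
    funext t
    simp only [logPosterior, dotProduct_add, dotProduct_smul, smul_eq_mul]
    congr 3
    funext i
    simp only [Pi.add_apply, Pi.smul_apply, smul_eq_mul]
    ring
  rw [hfun]
  refine h.congr_deriv ?_
  simp only [sub_dotProduct, smul_dotProduct, dotProduct_smul, smul_eq_mul]

end

theorem concaveOn_logPosterior {n : ℕ} (hn : 1 ≤ n) {β c : ℝ} (hβ : 0 < β) (hβ1 : β ≤ 1)
    (hc : 0 ≤ c) (w : Fin n → ℝ) :
    ConcaveOn ℝ (univ.pi fun _ => Ioi 0) (logPosterior β c w) := by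
  have hconv : Convex ℝ (univ.pi fun _ : Fin n => Ioi (0 : ℝ)) :=
    convex_pi fun _ _ => convex_Ioi 0
  have hA := convexOn_logMultiBeta hn
  have h_shift : ConvexOn ℝ (univ.pi fun _ => Ioi 0)
      (fun α : Fin n → ℝ => logMultiBeta (fun i => β * α i + (1 - β))) := by
    have hhom : ∀ α : Fin n → ℝ, AffineMap.homothety 1 β α = fun i => β * α i + (1 - β) :=
      fun α => by
        ext i
        simp only [AffineMap.homothety_apply, vsub_eq_sub, vadd_eq_add, Pi.add_apply,
          Pi.smul_apply, Pi.sub_apply, Pi.one_apply, smul_eq_mul]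
        ring
    refine ((hA.comp_affineMap (AffineMap.homothety 1 β)).subset (fun α hα => ?_) hconv).congr
      fun α _ => by rw [Function.comp_apply, hhom]
    simp only [mem_preimage, mem_univ_pi, mem_Ioi, hhom] at hα ⊢
    exact fun i => add_pos_of_pos_of_nonneg (mul_pos hβ (hα i)) (sub_nonneg.2 hβ1)
  exact (((dotProductBilin ℝ ℝ w).concaveOn hconv).sub h_shift).sub (hA.smul hc)

theorem posterior_mode_characterization_general (K : ℕ) (hK : 2 ≤ K) (β γ η : ℝ)
    (hβ : 0 < β) (hβ1 : β ≤ 1) (hγ : 0 < γ) (hη : 0 < η)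
    (ν s : Fin K → ℝ)
    (L : (Fin K → ℝ) → ℝ)
    (hL : ∀ α, L α =
      Real.log (Real.Gamma ((K : ℝ) * (1 - β) + β * ∑ i, α i))
        - ∑ i, Real.log (Real.Gamma (β * α i + (1 - β)))
        + β * ∑ i, α i * Real.log (s i)
        + γ * η * (Real.log (Real.Gamma (∑ i, α i))
            - ∑ i, Real.log (Real.Gamma (α i)))
        - γ * ∑ i, α i * ν i)
    (α : Fin K → ℝ) (hα : ∀ i, 0 < α i) :
    (∀ α' : Fin K → ℝ, (∀ i, 0 < α' i) → L α' ≤ L α) ↔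
      (∀ j : Fin K,
        β * digamma ((K : ℝ) * (1 - β) + β * ∑ i, α i)
          - β * digamma (β * α j + (1 - β)) + β * Real.log (s j)
          + γ * η * (digamma (∑ i, α i) - digamma (α j)) - γ * ν j = 0) := by
  have : Nonempty (Fin K) := ⟨⟨0, by omega⟩⟩
  set w : Fin K → ℝ := fun i => β * log (s i) - γ * ν i
  obtain rfl : L = logPosterior β (γ * η) w := by
    funext α
    have hw : w ⬝ᵥ α = β * ∑ i, α i * log (s i) - γ * ∑ i, α i * ν i := by
      simp only [w, dotProduct, Finset.mul_sum, ← Finset.sum_sub_distrib]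
      exact Finset.sum_congr rfl fun i _ => by ring
    rw [hL, logPosterior_apply, Fintype.card_fin, hw]
    ring
  have hopt := (concaveOn_logPosterior (by omega) hβ hβ1 (mul_pos hγ hη).le
    w).isMaxOn_iff_hasDerivAt_line (isOpen_set_pi finite_univ fun _ _ => isOpen_Ioi)
    (by simpa using hα) (hasDerivAt_logPosterior_line hβ hβ1 (γ * η) w hα)
  simp only [dotProduct_eq_zero_iff, isMaxOn_iff, mem_univ_pi, mem_Ioi] at hopt
  rw [hopt, funext_iff]
  refine forall_congr' fun j => Iff.of_eq (congrArg (· = (0 : ℝ)) ?_)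
  simp only [Pi.sub_apply, Pi.smul_apply, gradLogMultiBeta, sum_mul_add_one_sub,
    Fintype.card_fin, smul_eq_mul, w]
  ring

/-- Characterization of the posterior mode: a point `α` with positive entries
maximizes the log-posterior `L` over the positive orthant if and only if the
stationarity equations (11) of the paper hold at `α`. -/
theorem posterior_mode_characterization (K : ℕ) (hK : 2 ≤ K) (β γ η : ℝ)
    (hβ : 0 < β) (hβ1 : β ≤ 1) (hγ : 0 < γ) (hη : 0 < η)
    (ν s : Fin K → ℝ) (hs : ∀ i, 0 < s i)
    (L : (Fin K → ℝ) → ℝ)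
    (hL : ∀ α, L α =
      Real.log (Real.Gamma ((K : ℝ) * (1 - β) + β * ∑ i, α i))
        - ∑ i, Real.log (Real.Gamma (β * α i + (1 - β)))
        + β * ∑ i, α i * Real.log (s i)
        + γ * η * (Real.log (Real.Gamma (∑ i, α i))
            - ∑ i, Real.log (Real.Gamma (α i)))
        - γ * ∑ i, α i * ν i)
    (α : Fin K → ℝ) (hα : ∀ i, 0 < α i) :
    (∀ α' : Fin K → ℝ, (∀ i, 0 < α' i) → L α' ≤ L α) ↔
      (∀ j : Fin K,
        β * digamma ((K : ℝ) * (1 - β) + β * ∑ i, α i)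
          - β * digamma (β * α j + (1 - β)) + β * Real.log (s j)
          + γ * η * (digamma (∑ i, α i) - digamma (α j)) - γ * ν j = 0) :=
  posterior_mode_characterization_general K hK β γ η hβ hβ1 hγ hη ν s L hL α hα
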